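/- arXiv:2508.01632 — 2 statements merged into one kernel-verified Lean document; each statement's English description precedes it below -/
import Mathlib

section
/- For every integer k ≥ 2 and every r ∈ (0,1) small enough that all iterated logarithms log^{(0)} r, …, log^{(k-1)} r are positive, the Laplacian of the k-th iterated logarithm satisfies Δ(log^{(k)} r) = ( -∏_{j=1}^{k-1} log^{(j)} r − ∑_{l=1}^{k-1} ∏_{j=l+1}^{k-1} log^{(j)} r ) / ( r · ∏_{j=0}^{k-1} log^{(j)} r )², where the empty product ∏_{j=k}^{k-1} equals 1. -/
/-- The iterated logarithm: `itlog 0 r = |log r| = -log r` (for `r ∈ (0,1)`),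
and `itlog (ℓ+1) r = log (itlog ℓ r)`. -/
noncomputable def itlog : ℕ → ℝ → ℝ
  | 0, r => -Real.log r
  | (n + 1), r => Real.log (itlog n r)

/-- The standard Laplacian on `ℝ² ≅ ℂ`:
`Δf(z) = ∂²f/∂x²(z) + ∂²f/∂y²(z)`. -/
noncomputable def pLaplacian (f : ℂ → ℝ) (z : ℂ) : ℝ :=
  iteratedDeriv 2 (fun x : ℝ => f ((x : ℂ) + (z.im : ℂ) * Complex.I)) z.re +
  iteratedDeriv 2 (fun y : ℝ => f ((z.re : ℂ) + (y : ℂ) * Complex.I)) z.im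

/-!
For a radial function `g (‖z‖)` the Laplacian is `g'' + g' / r`. The chain rule gives
`(log⁽ᵏ⁾)' = -1 / Q` with `Q r = r · ∏_{j<k} log⁽ʲ⁾ r`, hence `(log⁽ᵏ⁾)'' = Q' / Q²`, and
`Q' = ∏_{j<k} log⁽ʲ⁾ r - ∑_{l<k} ∏_{l<j<k} log⁽ʲ⁾ r` by the product rule. The first term of `Q'`
cancels against `g' / r = -(∏_{j<k} log⁽ʲ⁾ r) / Q²`; splitting off the term `l = 0` of the sum
gives the stated numerator.
-/

open Filter Topology Finset

lemma hasDerivAt_sqrt_sq_add_sq {x : ℝ} (b : ℝ) (hx : x ^ 2 + b ^ 2 ≠ 0) :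
    HasDerivAt (fun x => √(x ^ 2 + b ^ 2)) (x / √(x ^ 2 + b ^ 2)) x := by
  convert ((hasDerivAt_pow 2 x).add_const (b ^ 2)).sqrt hx using 1
  field_simp
  ring

lemma deriv_deriv_comp_sqrt_sq_add_sq {g g' : ℝ → ℝ} {g'' a b r : ℝ} (hr : 0 < r)
    (hab : a ^ 2 + b ^ 2 = r ^ 2) (hg : ∀ᶠ s in 𝓝 r, HasDerivAt g (g' s) s)
    (hg' : HasDerivAt g' g'' r) :
    deriv (deriv fun x => g √(x ^ 2 + b ^ 2)) a = g'' * (a / r) ^ 2 + g' r * b ^ 2 / r ^ 3 := by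
  set ρ : ℝ → ℝ := fun x => √(x ^ 2 + b ^ 2)
  have hρa : ρ a = r := by simp only [ρ, hab, Real.sqrt_sq hr.le]
  have hρ_tendsto : Tendsto ρ (𝓝 a) (𝓝 r) := hρa ▸ (by fun_prop : Continuous ρ).continuousAt
  have hρ_deriv : ∀ x, 0 < ρ x → HasDerivAt ρ (x / ρ x) x := fun x hx =>
    hasDerivAt_sqrt_sq_add_sq b (Real.sqrt_pos.mp hx).ne'
  have hfirst : deriv (fun x => g (ρ x)) =ᶠ[𝓝 a] fun x => g' (ρ x) * (x / ρ x) := by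
    filter_upwards [hρ_tendsto.eventually (hg.and (eventually_gt_nhds hr))] with x ⟨hgx, hx⟩
    exact (hgx.comp x (hρ_deriv x hx)).deriv
  have hρa' : HasDerivAt ρ (a / r) a := hρa ▸ hρ_deriv a (hρa ▸ hr)
  have hsecond : HasDerivAt (fun x => g' (ρ x) * (x / ρ x))
      (g'' * (a / r) * (a / r) + g' r * ((1 * r - a * (a / r)) / r ^ 2)) a := by
    have hquot := (hasDerivAt_id' a).div hρa' (hρa ▸ hr.ne')
    rw [hρa] at hquot
    exact (((hρa ▸ hg').comp a hρa').mul hquot).congr_deriv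
      (by simp only [Function.comp_apply, Pi.div_apply, hρa])
  rw [hfirst.deriv_eq, hsecond.deriv]
  field_simp
  linear_combination -g' r * hab

lemma pLaplacian_comp_norm {g g' : ℝ → ℝ} {g'' : ℝ} {z : ℂ} (hz : 0 < ‖z‖)
    (hg : ∀ᶠ s in 𝓝 ‖z‖, HasDerivAt g (g' s) s) (hg' : HasDerivAt g' g'' ‖z‖) :
    pLaplacian (fun w => g ‖w‖) z = g'' + g' ‖z‖ / ‖z‖ := by
  have hz2 : z.re ^ 2 + z.im ^ 2 = ‖z‖ ^ 2 := by
    rw [Complex.sq_norm, Complex.normSq_apply]; ring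
  have hvert : (fun y : ℝ => g √(z.re ^ 2 + y ^ 2)) = fun y => g √(y ^ 2 + z.re ^ 2) := by
    funext y; rw [add_comm]
  simp only [pLaplacian, iteratedDeriv_succ, iteratedDeriv_zero, Complex.norm_add_mul_I, hvert]
  rw [deriv_deriv_comp_sqrt_sq_add_sq hz hz2 hg hg',
    deriv_deriv_comp_sqrt_sq_add_sq hz ((add_comm _ _).trans hz2) hg hg']
  field_simp
  linear_combination (g'' * ‖z‖ + g' ‖z‖) * hz2

lemma sum_range_succ_prod_Ico {R : Type*} [CommSemiring R] (f : ℕ → R) (n : ℕ) :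
    ∑ l ∈ range (n + 1), ∏ j ∈ Ico (l + 1) (n + 1), f j
      = (∑ l ∈ range n, ∏ j ∈ Ico (l + 1) n, f j) * f n + 1 := by
  rw [sum_range_succ, Ico_self, prod_empty, sum_mul]
  congr 1
  refine sum_congr rfl fun l hl => ?_
  exact prod_Ico_succ_top (mem_range.mp hl) f

lemma sum_range_prod_Ico_eq {R : Type*} [CommSemiring R] (f : ℕ → R) {k : ℕ} (hk : 0 < k) :
    ∑ l ∈ range k, ∏ j ∈ Ico (l + 1) k, f j
      = ∏ j ∈ Ico 1 k, f j + ∑ l ∈ Ico 1 k, ∏ j ∈ Ico (l + 1) k, f j := by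
  rw [range_eq_Ico, sum_eq_sum_Ico_succ_bot hk]

lemma hasDerivAt_itlog (k : ℕ) {r : ℝ} (hr : 0 < r) (hpos : ∀ j < k, 0 < itlog j r) :
    HasDerivAt (itlog k) (-(r * ∏ j ∈ range k, itlog j r)⁻¹) r := by
  induction k with
  | zero => exact (Real.hasDerivAt_log hr.ne').neg.congr_deriv (by simp)
  | succ n ih =>
    have hn := hpos n n.lt_succ_self
    refine ((ih fun j hj => hpos j (hj.trans n.lt_succ_self)).log hn.ne').congr_deriv ?_
    rw [prod_range_succ]
    field_simp

lemma eventually_itlog_pos (k : ℕ) {r : ℝ} (hr : 0 < r) (hpos : ∀ j < k, 0 < itlog j r) :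
    ∀ᶠ s in 𝓝 r, 0 < s ∧ ∀ j < k, 0 < itlog j s := by
  refine (eventually_gt_nhds hr).and ?_
  refine (eventually_all_finite (Set.finite_lt_nat k)).mpr fun j hj => ?_
  have hcont := (hasDerivAt_itlog j hr fun i hi => hpos i (hi.trans hj)).continuousAt
  exact hcont.eventually (eventually_gt_nhds (hpos j hj))

lemma hasDerivAt_prod_itlog (k : ℕ) {r : ℝ} (hr : 0 < r) (hpos : ∀ j < k, 0 < itlog j r) :
    HasDerivAt (fun s => ∏ j ∈ range k, itlog j s)
      (-(∑ l ∈ range k, ∏ j ∈ Ico (l + 1) k, itlog j r) / r) r := by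
  induction k with
  | zero => simpa using hasDerivAt_const r (1 : ℝ)
  | succ n ih =>
    have hpos' : ∀ j < n, 0 < itlog j r := fun j hj => hpos j (hj.trans n.lt_succ_self)
    have hprod : (∏ j ∈ range n, itlog j r) ≠ 0 :=
      (prod_pos fun j hj => hpos' j (mem_range.mp hj)).ne'
    simp only [prod_range_succ]
    refine ((ih hpos').mul (hasDerivAt_itlog n hr hpos')).congr_deriv ?_
    rw [sum_range_succ_prod_Ico]
    field_simp
    ring

lemma hasDerivAt_deriv_itlog (k : ℕ) {r : ℝ} (hr : 0 < r) (hpos : ∀ j < k, 0 < itlog j r) :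
    HasDerivAt (fun s => -(s * ∏ j ∈ range k, itlog j s)⁻¹)
      ((∏ j ∈ range k, itlog j r - ∑ l ∈ range k, ∏ j ∈ Ico (l + 1) k, itlog j r)
        / (r * ∏ j ∈ range k, itlog j r) ^ 2) r := by
  have hprod : (∏ j ∈ range k, itlog j r) ≠ 0 :=
    (prod_pos fun j hj => hpos j (mem_range.mp hj)).ne'
  refine (((hasDerivAt_id' r).mul (hasDerivAt_prod_itlog k hr hpos)).inv
    (mul_ne_zero hr.ne' hprod)).neg.congr_deriv ?_
  simp only [Pi.mul_apply]
  field_simp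
  ring

theorem stmt2_general (k : ℕ) (hk : 2 ≤ k) (z : ℂ)
    (hr0 : 0 < ‖z‖)
    (hpos : ∀ j < k, 0 < itlog j (‖z‖)) :
    pLaplacian (fun w => itlog k (‖w‖)) z =
      (-(∏ j ∈ Finset.Ico 1 k, itlog j (‖z‖))
          - ∑ l ∈ Finset.Ico 1 k, ∏ j ∈ Finset.Ico (l + 1) k, itlog j (‖z‖))
        / (‖z‖ * ∏ j ∈ Finset.range k, itlog j (‖z‖)) ^ 2 := by
  have hderiv : ∀ᶠ s in 𝓝 ‖z‖, HasDerivAt (itlog k) (-(s * ∏ j ∈ range k, itlog j s)⁻¹) s :=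
    (eventually_itlog_pos k hr0 hpos).mono fun s hs => hasDerivAt_itlog k hs.1 hs.2
  have hprod : (∏ j ∈ range k, itlog j ‖z‖) ≠ 0 :=
    (prod_pos fun j hj => hpos j (mem_range.mp hj)).ne'
  rw [pLaplacian_comp_norm hr0 hderiv (hasDerivAt_deriv_itlog k hr0 hpos),
    sum_range_prod_Ico_eq _ (by omega : 0 < k)]
  field_simp
  ring

/-- For every `k ≥ 2` and every point `z` of the punctured unit disk with `r = |z|` small
enough that all iterated logarithms `log⁽⁰⁾ r, …, log⁽ᵏ⁻¹⁾ r` are positive,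
`Δ(log⁽ᵏ⁾ r) = (-∏_{j=1}^{k-1} log⁽ʲ⁾ r − ∑_{l=1}^{k-1} ∏_{j=l+1}^{k-1} log⁽ʲ⁾ r)
  / (r · ∏_{j=0}^{k-1} log⁽ʲ⁾ r)²`, where the empty product equals `1`. -/
theorem stmt2 (k : ℕ) (hk : 2 ≤ k) (z : ℂ)
    (hr0 : 0 < ‖z‖) (hr1 : ‖z‖ < 1)
    (hpos : ∀ j < k, 0 < itlog j (‖z‖)) :
    pLaplacian (fun w => itlog k (‖w‖)) z =
      (-(∏ j ∈ Finset.Ico 1 k, itlog j (‖z‖))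
          - ∑ l ∈ Finset.Ico 1 k, ∏ j ∈ Finset.Ico (l + 1) k, itlog j (‖z‖))
        / (‖z‖ * ∏ j ∈ Finset.range k, itlog j (‖z‖)) ^ 2 :=
  stmt2_general k hk z hr0 hpos
end

section
/- Let f be a smooth function on a punctured disk B_R(p)∖{p} ⊂ ℝ² whose gradient is square-integrable: ∫_{B_R(p)∖{p}} ((∂_x f)² + (∂_y f)²) dx dy < ∞. Then liminf_{ε→0} ε ∫₀^{2π} |∂_r f(p + ε e^{iθ})| dθ = 0, where ∂_r is the radial derivative centered at p. -/
open MeasureTheory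

/-- The partial derivative `∂_x f` on `ℝ² ≅ ℂ`. -/
noncomputable def pdx (f : ℂ → ℝ) (z : ℂ) : ℝ :=
  deriv (fun x : ℝ => f ((x : ℂ) + (z.im : ℂ) * Complex.I)) z.re

/-- The partial derivative `∂_y f` on `ℝ² ≅ ℂ`. -/
noncomputable def pdy (f : ℂ → ℝ) (z : ℂ) : ℝ :=
  deriv (fun y : ℝ => f ((z.re : ℂ) + (y : ℂ) * Complex.I)) z.im

/-- The radial derivative `∂_r f` centered at `p`, evaluated at the point
`p + ρ e^{iθ}`. -/
noncomputable def pdr (f : ℂ → ℝ) (p : ℂ) (ρ θ : ℝ) : ℝ :=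
  deriv (fun s : ℝ => f (p + (s : ℂ) * Complex.exp ((θ : ℂ) * Complex.I))) ρ

/-
In polar coordinates around `p`, finiteness of the Dirichlet energy says that `r ↦ r E(r)` is
integrable on `(0, R)`, where `E(r) = ∫ |∇f|²(p + r e^{iθ}) dθ`. Since `1/r` is not integrable at
`0`, the quantity `r · (r E(r))` is arbitrarily small for arbitrarily small `r`. On the other
hand `|∂_r f| ≤ |∇f|`, so Cauchy–Schwarz on the circle gives
`(r ∫ |∂_r f|)² ≤ 2π r² E(r)`, and `r ∫ |∂_r f|` is nonnegative.
-/

open Set Filter Topology Complex Metric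
open scoped Real

theorem sq_integral_abs_le_measureReal_mul_integral_sq {α : Type*} [MeasurableSpace α]
    {μ : Measure α} [IsFiniteMeasure μ] {u : α → ℝ} (hu : Integrable u μ)
    (hu2 : Integrable (fun x => u x ^ 2) μ) :
    (∫ x, |u x| ∂μ) ^ 2 ≤ μ.real univ * ∫ x, u x ^ 2 ∂μ := by
  set A := ∫ x, |u x| ∂μ with hA
  set m := μ.real univ with hm_def
  rcases (measureReal_nonneg : 0 ≤ m).eq_or_lt with hm | hm
  · have : μ = 0 := Measure.measure_univ_eq_zero.1 ((measureReal_eq_zero_iff).1 hm.symm)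
    simp [A, this]
  have hlin : Integrable (fun x => u x ^ 2 - 2 * (A / m) * |u x|) μ :=
    hu2.sub (hu.abs.const_mul _)
  have hexpand : ∫ x, (|u x| - A / m) ^ 2 ∂μ = ∫ x, u x ^ 2 ∂μ - A ^ 2 / m := by
    simp_rw [sub_sq, sq_abs, mul_right_comm _ |_|]
    rw [integral_add hlin (integrable_const _), integral_sub hu2 (hu.abs.const_mul _),
      integral_const_mul, integral_const, smul_eq_mul, ← hA, ← hm_def]
    field_simp
    ring
  have := integral_nonneg (μ := μ) (f := fun x => (|u x| - A / m) ^ 2) fun x => sq_nonneg _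
  rw [hexpand, sub_nonneg, div_le_iff₀ hm] at this
  linarith

theorem frequently_mul_le_of_integrableOn {R : ℝ} (hR : 0 < R) {h : ℝ → ℝ}
    (hh : IntegrableOn h (Ioo 0 R)) {c : ℝ} (hc : 0 < c) :
    ∃ᶠ r in 𝓝[>] 0, r * h r ≤ c := by
  by_contra hcon
  obtain ⟨δ, hδ, hδh⟩ := mem_nhdsGT_iff_exists_Ioo_subset.1 (not_frequently.1 hcon)
  set δ' := min δ R
  have hδ' : 0 < δ' := lt_min hδ hR
  -- near `0`, `r⁻¹ < h r / c`, but `r⁻¹` is not integrable at `0`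
  have hinv : IntegrableOn (fun r : ℝ => r⁻¹) (Ioo 0 δ') := by
    refine ((hh.mono_set (Ioo_subset_Ioo_right (min_le_right _ _))).div_const c).mono'
      measurable_inv.aestronglyMeasurable ?_
    filter_upwards [ae_restrict_mem measurableSet_Ioo] with r hr
    have hr' : c < r * h r := not_le.1 (hδh ⟨hr.1, hr.2.trans_le (min_le_left _ _)⟩)
    rw [Real.norm_of_nonneg (inv_nonneg.2 hr.1.le), le_div_iff₀ hc, inv_mul_le_iff₀ hr.1]
    exact hr'.le
  rw [← intervalIntegrable_iff_integrableOn_Ioo_of_le hδ'.le, intervalIntegrable_inv_iff] at hinv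
  simp [hδ'.ne] at hinv

theorem liminf_eq_zero_of_frequently_le {α : Type*} {l : Filter α} {u : α → ℝ}
    (h0 : ∀ᶠ x in l, 0 ≤ u x) (hle : ∀ c > 0, ∃ᶠ x in l, u x ≤ c) : liminf u l = 0 := by
  have hbdd : IsBoundedUnder (· ≥ ·) l u := ⟨0, by simpa [eventually_map] using h0⟩
  refine le_antisymm (le_of_forall_pos_le_add fun c hc => ?_)
    (le_liminf_of_le (IsCoboundedUnder.of_frequently_le (hle 1 one_pos)) h0)
  simpa using liminf_le_of_frequently_le (hle c hc) hbdd

theorem integrableOn_comp_polarCoord_symm {E : Type*} [NormedAddCommGroup E] [NormedSpace ℝ E]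
    {g : ℂ → E} (hg : Integrable g) :
    IntegrableOn (fun q : ℝ × ℝ => q.1 • g (Complex.polarCoord.symm q)) polarCoord.target := by
  have hg' : Integrable (g ∘ measurableEquivRealProd.symm) :=
    (volume_preserving_equiv_real_prod.symm.integrable_comp_emb
      measurableEquivRealProd.symm.measurableEmbedding).2 hg
  have hpolar := (integrableOn_image_iff_integrableOn_abs_det_fderiv_smul volume
    polarCoord.open_target.measurableSet
    (fun q _ => (hasFDerivAt_polarCoord_symm q).hasFDerivWithinAt) polarCoord.symm.injOn _).1
    hg'.integrableOn
  refine hpolar.congr_fun (fun q (hq : 0 < q.1 ∧ _) => ?_) polarCoord.open_target.measurableSet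
  simp only [det_fderivPolarCoordSymm, abs_of_pos hq.1, Function.comp_apply,
    measurableEquivRealProd_symm_polarCoord_symm_apply]

theorem integrableOn_Ioi_mul_integral_comp_circleMap {g : ℂ → ℝ} (hg : Integrable g) (p : ℂ) :
    IntegrableOn (fun r : ℝ => r * ∫ θ in Ioo (-π) π, g (circleMap p r θ)) (Ioi 0) := by
  have h := integrableOn_comp_polarCoord_symm (hg.comp_add_left p)
  rw [IntegrableOn, polarCoord_target, Measure.volume_eq_prod, ← Measure.prod_restrict] at h
  refine IntegrableOn.congr_fun h.integral_prod_left (fun r _ => ?_) measurableSet_Ioi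
  rw [← integral_const_mul]
  congr 1 with θ
  simp [circleMap, exp_mul_I, ← ofReal_cos, ← ofReal_sin]

section PartialDerivatives

variable {f : ℂ → ℝ}

theorem pdx_eq_fderiv {z : ℂ} (hf : DifferentiableAt ℝ f z) : pdx f z = fderiv ℝ f z 1 := by
  have hline : HasDerivAt (fun x : ℝ => (x : ℂ) + z.im * I) 1 z.re :=
    ofRealCLM.hasDerivAt.add_const _
  exact (hf.hasFDerivAt.comp_hasDerivAt_of_eq z.re hline (re_add_im z).symm).deriv

theorem pdy_eq_fderiv {z : ℂ} (hf : DifferentiableAt ℝ f z) : pdy f z = fderiv ℝ f z I := by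
  have hline : HasDerivAt (fun y : ℝ => (z.re : ℂ) + y * I) I z.im := by
    simpa using (ofRealCLM.hasDerivAt.mul_const I).const_add (z.re : ℂ)
  exact (hf.hasFDerivAt.comp_hasDerivAt_of_eq z.im hline (re_add_im z).symm).deriv

theorem pdr_eq_fderiv {p : ℂ} {ρ θ : ℝ} (hf : DifferentiableAt ℝ f (circleMap p ρ θ)) :
    pdr f p ρ θ = fderiv ℝ f (circleMap p ρ θ) (exp (θ * I)) := by
  have hray : HasDerivAt (fun s : ℝ => circleMap p s θ) (exp (θ * I)) ρ := by
    simpa [circleMap] using (ofRealCLM.hasDerivAt.mul_const (exp (θ * I))).const_add p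
  exact (hf.hasFDerivAt.comp_hasDerivAt ρ hray).deriv

theorem pdr_periodic (f : ℂ → ℝ) (p : ℂ) (ρ : ℝ) : Function.Periodic (pdr f p ρ) (2 * π) := by
  intro θ
  simp only [pdr]
  rw [ofReal_add, add_mul, exp_add, ofReal_mul, ofReal_ofNat, exp_two_pi_mul_I, mul_one]

theorem sq_apply_le_of_norm_eq_one (D : ℂ →L[ℝ] ℝ) {w : ℂ} (hw : ‖w‖ = 1) :
    D w ^ 2 ≤ D 1 ^ 2 + D I ^ 2 := by
  have hDw : D w = w.re * D 1 + w.im * D I := by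
    have hw' : w = w.re • (1 : ℂ) + w.im • I := by simp [real_smul, re_add_im]
    conv_lhs => rw [hw', map_add, map_smul, map_smul, smul_eq_mul, smul_eq_mul]
  have hw2 : w.re ^ 2 + w.im ^ 2 = 1 := by
    simpa [sq, hw, normSq_apply] using (Complex.sq_norm w).symm
  rw [hDw]
  nlinarith [sq_nonneg (w.re * D I - w.im * D 1)]

theorem pdr_sq_le {p : ℂ} {ρ θ : ℝ} (hf : DifferentiableAt ℝ f (circleMap p ρ θ)) :
    pdr f p ρ θ ^ 2 ≤ pdx f (circleMap p ρ θ) ^ 2 + pdy f (circleMap p ρ θ) ^ 2 := by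
  rw [pdr_eq_fderiv hf, pdx_eq_fderiv hf, pdy_eq_fderiv hf]
  exact sq_apply_le_of_norm_eq_one _ (norm_exp_ofReal_mul_I θ)

end PartialDerivatives

theorem sq_integral_abs_pdr_le {f : ℂ → ℝ} {U : Set ℂ} (hU : IsOpen U) (hf : ContDiffOn ℝ 1 f U)
    {p : ℂ} {r : ℝ} (hr : 0 ≤ r) (hsU : sphere p r ⊆ U) :
    (∫ θ in (0 : ℝ)..2 * π, |pdr f p r θ|) ^ 2 ≤
      2 * π * ∫ θ in Ioo (-π) π,
        (pdx f (circleMap p r θ) ^ 2 + pdy f (circleMap p r θ) ^ 2) := by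
  have hmem : ∀ θ, circleMap p r θ ∈ U := fun θ => hsU (circleMap_mem_sphere p hr θ)
  have hdiff : ∀ θ, DifferentiableAt ℝ f (circleMap p r θ) := fun θ =>
    (hf.differentiableOn one_ne_zero).differentiableAt (hU.mem_nhds (hmem θ))
  have hD : Continuous fun θ => fderiv ℝ f (circleMap p r θ) :=
    (hf.continuousOn_fderiv_of_isOpen hU le_rfl).comp_continuous (continuous_circleMap p r) hmem
  have hu : Continuous (pdr f p r) := by
    simp_rw [funext fun θ => pdr_eq_fderiv (hdiff θ)]
    exact hD.clm_apply (by fun_prop)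
  have hG : Continuous fun θ => pdx f (circleMap p r θ) ^ 2 + pdy f (circleMap p r θ) ^ 2 := by
    simp_rw [pdx_eq_fderiv (hdiff _), pdy_eq_fderiv (hdiff _)]
    fun_prop
  have hshift : ∫ θ in (0 : ℝ)..2 * π, |pdr f p r θ|
      = ∫ θ in Ioo (-π) π, |pdr f p r θ| := by
    have hper : Function.Periodic (fun θ => |pdr f p r θ|) (2 * π) :=
      (pdr_periodic f p r).comp abs
    have := hper.intervalIntegral_add_eq 0 (-π)
    rw [zero_add, show -π + 2 * π = π by ring] at this
    rw [this, intervalIntegral.integral_of_le (by linarith [Real.pi_pos]),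
      integral_Ioc_eq_integral_Ioo]
  have hvol : (volume.restrict (Ioo (-π) π)).real univ = 2 * π := by
    rw [measureReal_restrict_apply_univ, Real.volume_real_Ioo_of_le (by linarith [Real.pi_pos])]
    ring
  rw [hshift]
  calc (∫ θ in Ioo (-π) π, |pdr f p r θ|) ^ 2
      ≤ 2 * π * ∫ θ in Ioo (-π) π, pdr f p r θ ^ 2 := by
        rw [← hvol]
        exact sq_integral_abs_le_measureReal_mul_integral_sq
          (hu.integrableOn_Icc.mono_set Ioo_subset_Icc_self)
          ((hu.pow 2).integrableOn_Icc.mono_set Ioo_subset_Icc_self)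
    _ ≤ _ := by
        refine mul_le_mul_of_nonneg_left ?_ (by positivity)
        exact setIntegral_mono ((hu.pow 2).integrableOn_Icc.mono_set Ioo_subset_Icc_self)
          (hG.integrableOn_Icc.mono_set Ioo_subset_Icc_self) fun θ => pdr_sq_le (hdiff θ)

theorem sphere_subset_ball_diff_singleton {X : Type*} [PseudoMetricSpace X] {p : X} {r R : ℝ} (hr : 0 < r) (hrR : r < R) :
    sphere p r ⊆ ball p R \ {p} :=
  subset_sdiff_singleton (sphere_subset_ball hrR) (by simp [hr.ne])

theorem integrableOn_Ioo_mul_integral_comp_circleMap {g : ℂ → ℝ} {p : ℂ} {R : ℝ}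
    (hg : IntegrableOn g (ball p R \ {p})) :
    IntegrableOn (fun r : ℝ => r * ∫ θ in Ioo (-π) π, g (circleMap p r θ))
      (Ioo 0 R) := by
  have hs : MeasurableSet (ball p R \ {p}) := measurableSet_ball.diff (measurableSet_singleton p)
  refine ((integrableOn_Ioi_mul_integral_comp_circleMap (hg.integrable_indicator hs) p).mono_set
    Ioo_subset_Ioi_self).congr_fun (fun r hr => ?_) measurableSet_Ioo
  refine congrArg (r * ·) (setIntegral_congr_fun measurableSet_Ioo fun θ _ => ?_)
  exact indicator_of_mem (sphere_subset_ball_diff_singleton hr.1 hr.2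
    (circleMap_mem_sphere p hr.1.le θ)) g

/-- Let `f` be a smooth function on a punctured disk `B_R(p) ∖ {p} ⊂ ℝ² ≅ ℂ` whose
gradient is square-integrable, `∫_{B_R(p)∖{p}} ((∂ₓf)² + (∂ᵧf)²) < ∞`.  Then
`liminf_{ε→0⁺} ε ∫₀^{2π} |∂_r f(p + ε e^{iθ})| dθ = 0`. -/
theorem stmt8 (p : ℂ) (R : ℝ) (hR : 0 < R) (f : ℂ → ℝ)
    (hf : ContDiffOn ℝ (⊤ : ℕ∞) f (Metric.ball p R \ {p}))
    (hgrad : IntegrableOn (fun z => pdx f z ^ 2 + pdy f z ^ 2)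
      (Metric.ball p R \ {p}) volume) :
    Filter.liminf (fun ε : ℝ => ε * ∫ θ in (0 : ℝ)..(2 * Real.pi), |pdr f p ε θ|)
      (nhdsWithin 0 (Set.Ioi 0)) = 0 := by
  set E : ℝ → ℝ := fun r => ∫ θ in Ioo (-π) π,
    (pdx f (circleMap p r θ) ^ 2 + pdy f (circleMap p r θ) ^ 2)
  have hE : IntegrableOn (fun r => r * E r) (Ioo 0 R) :=
    integrableOn_Ioo_mul_integral_comp_circleMap hgrad
  have hCS : ∀ r ∈ Ioo 0 R, (∫ θ in (0 : ℝ)..2 * π, |pdr f p r θ|) ^ 2 ≤ 2 * π * E r :=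
    fun r hr => sq_integral_abs_pdr_le (isOpen_ball.sdiff isClosed_singleton)
      (hf.of_le (by exact_mod_cast le_top)) hr.1.le (sphere_subset_ball_diff_singleton hr.1 hr.2)
  refine liminf_eq_zero_of_frequently_le ?_ fun c hc => ?_
  · filter_upwards [self_mem_nhdsWithin] with r hr
    exact mul_nonneg hr.le
      (intervalIntegral.integral_nonneg (by positivity) fun _ _ => abs_nonneg _)
  have hfreq := frequently_mul_le_of_integrableOn hR hE (c := c ^ 2 / (2 * π)) (by positivity)
  refine (hfreq.and_eventually (Ioo_mem_nhdsGT hR)).mono fun r ⟨hrE, hr⟩ => ?_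
  set A := ∫ θ in (0 : ℝ)..2 * π, |pdr f p r θ|
  have hA : 0 ≤ A := intervalIntegral.integral_nonneg (by positivity) fun _ _ => abs_nonneg _
  have hsq : (r * A) ^ 2 ≤ c ^ 2 := calc
    (r * A) ^ 2 = r ^ 2 * A ^ 2 := by ring
    _ ≤ r ^ 2 * (2 * π * E r) := by gcongr; exact hCS r hr
    _ = 2 * π * (r * (r * E r)) := by ring
    _ ≤ 2 * π * (c ^ 2 / (2 * π)) := by gcongr
    _ = c ^ 2 := by field_simp
  exact (pow_le_pow_iff_left₀ (mul_nonneg hr.1.le hA) hc.le two_ne_zero).1 hsq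
end
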